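/- arXiv:1910.02716 — 6 statements merged into one kernel-verified Lean document; each statement's English description precedes it below -/
import Mathlib

section
/- A Leibniz algebra g satisfies the identity [[x,x],y] = 0 for all x,y ∈ g if and only if g is a central extension of a Lie algebra, i.e. there exists a Leibniz algebra surjection p : g → h onto a Lie algebra h whose kernel A satisfies [A,g] = 0 = [g,A]. -/
/-- A Leibniz algebra `g` (char ≠ 2) satisfies `[[x,x],y] = 0` for all `x, y` iff it is a
central extension of a Lie algebra: there is a central (two-sided annihilated) submodule
`A ⊆ g` such that the quotient `g/A` is a Lie algebra, i.e. all squares `[x,x]` lie in `A`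
(the surjection being the projection `g → g/A` with kernel `A`). -/
theorem stmt_5 {K V : Type*} [Field K] [AddCommGroup V] [Module K V]
    (h2 : (2 : K) ≠ 0)
    (b : V →ₗ[K] V →ₗ[K] V)
    (leib : ∀ x y z : V, b x (b y z) = b (b x y) z - b (b x z) y) :
    (∀ x y : V, b (b x x) y = 0) ↔
      ∃ A : Submodule K V,
        (∀ a ∈ A, ∀ x : V, b a x = 0 ∧ b x a = 0) ∧ (∀ x : V, b x x ∈ A) := by
  constructor
  · intro h
    refine ⟨{ carrier := {a | ∀ x : V, b a x = 0 ∧ b x a = 0}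
              add_mem' := ?_
              zero_mem' := ?_
              smul_mem' := ?_ }, ?_, ?_⟩
    · intro a c ha hc x
      simp [map_add, (ha x).1, (ha x).2, (hc x).1, (hc x).2]
    · intro x; simp
    · intro k a ha x
      simp [map_smul, (ha x).1, (ha x).2]
    · intro a ha x; exact ha x
    · intro x y
      refine ⟨h x y, ?_⟩
      have := leib y x x
      simpa using this.symm ▸ (sub_self (b (b y x) x))
  · rintro ⟨A, hcent, hsq⟩ x y
    exact (hcent _ (hsq x) y).1
end

section
/- In any μ-algebra, the trilinear function (x,y,z) ↦ x{y,z} is alternating (skew-symmetric); in particular x{x,y} = 0 and x{y,z} + y{x,z} = 0 for all x,y,z. -/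
/-- In any μ-algebra (operations `xy = m x y` and `{x,y} = br x y` satisfying axioms
(i)–(v), char ≠ 2), the trilinear function `(x,y,z) ↦ x{y,z}` is alternating;
in particular `x{x,y} = 0` and `x{y,z} + y{x,z} = 0`. -/
theorem stmt_9 {K V : Type*} [Field K] [AddCommGroup V] [Module K V]
    (h2 : (2 : K) ≠ 0)
    (m : V →ₗ[K] V →ₗ[K] V) (br : V →ₗ[K] V →ₗ[K] V)
    (ax1 : ∀ x y : V, m x y = m y x)
    (ax2 : ∀ x y z : V, m x (m y z) = 0 ∧ m (m x y) z = 0)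
    (ax3 : ∀ x : V, br x x = 0)
    (ax4 : ∀ x y z : V, br (m x y) z = 0)
    (ax5 : ∀ x y z : V,
      br x (br y z) + br z (br x y) + br y (br z x) = m x (br y z)) :
    (∀ x y : V, m x (br x y) = 0) ∧
    (∀ x y : V, m x (br y y) = 0) ∧
    (∀ x y z : V, m x (br y z) + m y (br x z) = 0) ∧
    (∀ x y z : V, m x (br y z) + m x (br z y) = 0) := by
  have anti : ∀ x y : V, br x y = - br y x := by
    intro x y
    have h := ax3 (x + y)
    simp only [map_add, LinearMap.add_apply, ax3] at h
    have h' : br x y + br y x = 0 := by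
      rw [← h]; abel
    exact eq_neg_of_add_eq_zero_left h'
  have h1 : ∀ x y : V, m x (br x y) = 0 := by
    intro x y
    have h := ax5 x y x
    rw [ax3, anti y x] at h
    simp only [map_neg, LinearMap.neg_apply, map_zero] at h
    rw [← neg_eq_zero, ← h]; abel
  refine ⟨h1, fun x y => by rw [ax3, map_zero], ?_, fun x y z => by
    rw [anti z y, map_neg, add_neg_cancel]⟩
  intro x y z
  have h := h1 (x + y) z
  simp only [map_add, LinearMap.add_apply, h1] at h
  rw [← h]; abel
end

section
/- Let g be a Ronco algebra over a field of characteristic ≠ 2. Define {x,y} = ([x,y] - [y,x])/2 and xy = ([x,y] + [y,x])/2. Then (g, ·, {-,-}) is a μ-algebra (satisfies axioms (i)–(v) of μ-algebras). -/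
/-- Let `g` be a Ronco algebra over a field of characteristic ≠ 2. With
`{x,y} := ([x,y] - [y,x])/2` and `xy := ([x,y] + [y,x])/2`, the operations satisfy the
μ-algebra axioms (i)–(v). -/
theorem stmt_10 {K V : Type*} [Field K] [AddCommGroup V] [Module K V]
    (h2 : (2 : K) ≠ 0)
    (b : V →ₗ[K] V →ₗ[K] V)
    (leib : ∀ x y z : V, b x (b y z) = b (b x y) z - b (b x z) y)
    (ronco : ∀ x y : V, b (b x x) y = 0)
    (m : V → V → V) (hm : ∀ x y : V, m x y = (2 : K)⁻¹ • (b x y + b y x))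
    (br : V → V → V) (hbr : ∀ x y : V, br x y = (2 : K)⁻¹ • (b x y - b y x)) :
    (∀ x y : V, m x y = m y x) ∧
    (∀ x y z : V, m x (m y z) = 0 ∧ m (m x y) z = 0) ∧
    (∀ x : V, br x x = 0) ∧
    (∀ x y z : V, br (m x y) z = 0) ∧
    (∀ x y z : V,
      br x (br y z) + br z (br x y) + br y (br z x) = m x (br y z)) := by
  -- polarization of the Ronco identity
  have pol : ∀ x y z : V, b (b x y) z = - b (b y x) z := by
    intro x y z
    have h := ronco (x + y) z
    simp only [map_add, LinearMap.add_apply, ronco] at h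
    rw [eq_neg_iff_add_eq_zero]
    abel_nf at h ⊢
    simpa using h
  have anti : ∀ x y z : V, b x (b y z) = - b x (b z y) := by
    intro x y z
    rw [leib, leib]
    abel
  -- b x (m y z) = 0 and b (m y z) x = 0
  have hxm : ∀ x y z : V, b x (m y z) = 0 := by
    intro x y z
    rw [hm, map_smul, map_add, anti x y z]
    simp
  have hmx : ∀ x y z : V, b (m y z) x = 0 := by
    intro x y z
    rw [hm, map_smul, LinearMap.smul_apply, map_add, LinearMap.add_apply, pol y z x]
    simp
  have bxbr : ∀ x y z : V, b x (br y z) = b x (b y z) := by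
    intro x y z
    rw [hbr, map_smul, map_sub, anti x z y, sub_neg_eq_add, ← two_smul K,
      smul_smul, inv_mul_cancel₀ h2, one_smul]
  have brbx : ∀ x y z : V, b (br y z) x = b (b y z) x := by
    intro x y z
    rw [hbr, map_smul, LinearMap.smul_apply, map_sub, LinearMap.sub_apply, pol z y x,
      sub_neg_eq_add, ← two_smul K, smul_smul, inv_mul_cancel₀ h2, one_smul]
  refine ⟨?_, ?_, ?_, ?_, ?_⟩
  · intro x y
    rw [hm, hm, add_comm]
  · intro x y z
    constructor
    · rw [hm x (m y z), hxm, hmx, add_zero, smul_zero]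
    · rw [hm (m x y) z, hxm, hmx, add_zero, smul_zero]
  · intro x
    rw [hbr]
    simp
  · intro x y z
    rw [hbr (m x y) z, hxm, hmx, sub_zero, smul_zero]
  · intro x y z
    rw [hbr x (br y z), hbr z (br x y), hbr y (br z x), hm x (br y z),
      bxbr, brbx, bxbr, brbx, bxbr, brbx,
      leib z x y, leib y z x, pol z y x, pol y x z]
    module
end

section
/- Let m be a μ-algebra. Define [x,y] = {x,y} + xy. Then [-,-] makes m into a Ronco algebra, i.e. it satisfies the Leibniz identity [x,[y,z]] = [[x,y],z] - [[x,z],y] and [[x,x],y] = 0. -/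
/-- Let `m` be a μ-algebra. Then `[x,y] := {x,y} + xy` makes it a Ronco algebra:
the Leibniz identity holds and `[[x,x],y] = 0`. -/
theorem stmt_11 {K V : Type*} [Field K] [AddCommGroup V] [Module K V]
    (h2 : (2 : K) ≠ 0)
    (m : V →ₗ[K] V →ₗ[K] V) (br : V →ₗ[K] V →ₗ[K] V)
    (ax1 : ∀ x y : V, m x y = m y x)
    (ax2 : ∀ x y z : V, m x (m y z) = 0 ∧ m (m x y) z = 0)
    (ax3 : ∀ x : V, br x x = 0)
    (ax4 : ∀ x y z : V, br (m x y) z = 0)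
    (ax5 : ∀ x y z : V,
      br x (br y z) + br z (br x y) + br y (br z x) = m x (br y z))
    (b : V → V → V) (hb : ∀ x y : V, b x y = br x y + m x y) :
    (∀ x y z : V, b x (b y z) = b (b x y) z - b (b x z) y) ∧
    (∀ x y : V, b (b x x) y = 0) := by
  have skew : ∀ x y : V, br x y = - br y x := by
    intro x y
    have h := ax3 (x + y)
    simp only [map_add, LinearMap.add_apply, ax3, zero_add, add_zero] at h
    exact eq_neg_of_add_eq_zero_right h
  have br_m : ∀ x y z : V, br x (m y z) = 0 := by
    intro x y z
    rw [skew, ax4, neg_zero]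
  have key : ∀ x y z : V, m (br x y) z = m x (br y z) := by
    intro x y z
    have h1 := ax5 x y z
    have h2 := ax5 z x y
    rw [ax1, ← h1, ← h2]
    abel
  constructor
  · intro x y z
    have ax2a : ∀ x y z : V, m x (m y z) = 0 := fun x y z => (ax2 x y z).1
    have ax2b : ∀ x y z : V, m (m x y) z = 0 := fun x y z => (ax2 x y z).2
    simp only [hb, map_add, LinearMap.add_apply, br_m, ax4, ax2a, ax2b,
      add_zero, zero_add]
    -- goal: br x (br y z) + m x (br y z)
    --   = (br (br x y) z + m (br x y) z) - (br (br x z) y + m (br x z) y)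
    have e1 : br (br x y) z = - br z (br x y) := skew _ _
    have e2 : br (br x z) y = br y (br z x) := by
      rw [skew (br x z) y, skew x z, map_neg, neg_neg]
    have e3 : m (br x y) z = m x (br y z) := key x y z
    have e4 : m (br x z) y = - m x (br y z) := by
      rw [key x z y, skew z y, map_neg]
    have e5 : br x (br y z) = m x (br y z) - br z (br x y) - br y (br z x) := by
      rw [← ax5 x y z]; abel
    rw [e1, e2, e3, e4, e5]
    abel
  · intro x y
    have hxx : b x x = m x x := by rw [hb, ax3, zero_add]
    rw [hb, hxx, ax4, (ax2 x x y).2, add_zero]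
end

section
/- In a Ronco algebra g with {x,y} = ([x,y]-[y,x])/2 and xy = ([x,y]+[y,x])/2, the identity 2·x{y,z} = [[x,y],z] + [[z,x],y] + [[y,z],x] holds (the cyclic sum of double brackets). -/
/-- In a Ronco algebra `g` (char ≠ 2), with `{x,y} = ([x,y]-[y,x])/2` and
`xy = ([x,y]+[y,x])/2`, one has `2·x{y,z} = [[x,y],z] + [[z,x],y] + [[y,z],x]`. -/
theorem stmt_12 {K V : Type*} [Field K] [AddCommGroup V] [Module K V]
    (h2 : (2 : K) ≠ 0)
    (b : V →ₗ[K] V →ₗ[K] V)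
    (leib : ∀ x y z : V, b x (b y z) = b (b x y) z - b (b x z) y)
    (ronco : ∀ x y : V, b (b x x) y = 0)
    (m : V → V → V) (hm : ∀ x y : V, m x y = (2 : K)⁻¹ • (b x y + b y x))
    (br : V → V → V) (hbr : ∀ x y : V, br x y = (2 : K)⁻¹ • (b x y - b y x)) :
    ∀ x y z : V,
      (2 : K) • m x (br y z) = b (b x y) z + b (b z x) y + b (b y z) x := by
  have pol : ∀ u v w : V, b (b u v) w = - b (b v u) w := by
    intro u v w
    have h := ronco (u + v) w
    simp only [map_add, LinearMap.add_apply, ronco, zero_add, add_zero] at h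
    rw [add_comm] at h
    exact eq_neg_of_add_eq_zero_left h
  intro x y z
  rw [hm, hbr]
  simp only [map_smul, LinearMap.smul_apply, map_sub, LinearMap.sub_apply, map_add,
    LinearMap.add_apply]
  rw [leib x y z, leib x z y, pol z y x, pol z x y]
  match_scalars <;> field_simp <;> norm_num
end

section
/- In a Ronco algebra g with {x,y} = ([x,y]-[y,x])/2, the identity 2·{x,{y,z}} = [[x,y],z] + [[z,x],y] - [[y,z],x] holds for all x,y,z ∈ g. -/
/-- In a Ronco algebra `g` (char ≠ 2), with `{x,y} = ([x,y]-[y,x])/2`, one has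
`2·{x,{y,z}} = [[x,y],z] + [[z,x],y] - [[y,z],x]`. -/
theorem stmt_13 {K V : Type*} [Field K] [AddCommGroup V] [Module K V]
    (h2 : (2 : K) ≠ 0)
    (b : V →ₗ[K] V →ₗ[K] V)
    (leib : ∀ x y z : V, b x (b y z) = b (b x y) z - b (b x z) y)
    (ronco : ∀ x y : V, b (b x x) y = 0)
    (br : V → V → V) (hbr : ∀ x y : V, br x y = (2 : K)⁻¹ • (b x y - b y x)) :
    ∀ x y z : V,
      (2 : K) • br x (br y z) = b (b x y) z + b (b z x) y - b (b y z) x := by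
  have pol : ∀ x y z : V, b (b x y) z = - b (b y x) z := by
    intro x y z
    have h := ronco (x + y) z
    simp only [map_add, LinearMap.add_apply] at h
    rw [ronco x z, ronco y z] at h
    linear_combination (norm := abel) h
  intro x y z
  rw [hbr x _, hbr y z]
  rw [smul_smul, mul_inv_cancel₀ h2, one_smul]
  simp only [map_smul, map_sub, LinearMap.sub_apply, LinearMap.smul_apply, smul_sub]
  rw [leib x y z, leib x z y, pol z y x, pol x z y]
  match_scalars <;> (field_simp; ring)
end
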